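/- arXiv:1702.05578 — 2 statements merged into one kernel-verified Lean document; each statement's English description precedes it below -/
import Mathlib

section
/- In a normed BPA system, if Rd(α) = Rd(β) (the redundant sets of α and β coincide), then for all processes γ₁, γ₂: γ₁α ≃ γ₂α if and only if γ₁β ≃ γ₂β. -/
/-- Silent-step closure (⇒): reflexive transitive closure of τ-transitions. -/
def SilentStar {S A : Type*} (trans : S → A → S → Prop) (tau : A) : S → S → Prop :=
  Relation.ReflTransGen (fun p q => trans p tau q)

/-- A symmetric relation is a branching bisimulation. -/
def IsBranchingBisim {S A : Type*} (trans : S → A → S → Prop) (tau : A)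
    (R : S → S → Prop) : Prop :=
  Symmetric R ∧
  ∀ a b a' (l : A), R a b → trans a l a' →
    (l = tau ∧ R a' b) ∨
    ∃ b'' b', SilentStar trans tau b b'' ∧ trans b'' l b' ∧ R a b'' ∧ R a' b'

/-- A symmetric relation is a weak bisimulation. -/
def IsWeakBisim {S A : Type*} (trans : S → A → S → Prop) (tau : A)
    (R : S → S → Prop) : Prop :=
  Symmetric R ∧
  ∀ a b a' (l : A), R a b → trans a l a' →
    (l = tau ∧ R a' b) ∨
    ∃ g1 g2 b', SilentStar trans tau b g1 ∧ trans g1 l g2 ∧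
      SilentStar trans tau g2 b' ∧ R a' b'

/-- Branching bisimilarity: the union of all branching bisimulations. -/
def BrBisim {S A : Type*} (trans : S → A → S → Prop) (tau : A) (a b : S) : Prop :=
  ∃ R, IsBranchingBisim trans tau R ∧ R a b

/-- Weak bisimilarity: the union of all weak bisimulations. -/
def WkBisim {S A : Type*} (trans : S → A → S → Prop) (tau : A) (a b : S) : Prop :=
  ∃ R, IsWeakBisim trans tau R ∧ R a b

/-- One-step transition of a BPA system: X β →λ α β whenever X →λ α is a rule. -/
def BPA.Trans {V A : Type*} (rules : V → A → List V → Prop)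
    (p : List V) (l : A) (q : List V) : Prop :=
  ∃ X α β, p = X :: β ∧ rules X l α ∧ q = α ++ β

/-- A step by some action. -/
def BPA.Step {V A : Type*} (rules : V → A → List V → Prop) (p q : List V) : Prop :=
  ∃ l, BPA.Trans rules p l q

/-- Reachability in a BPA system. -/
def BPA.Reach {V A : Type*} (rules : V → A → List V → Prop) : List V → List V → Prop :=
  Relation.ReflTransGen (BPA.Step rules)

/-- A BPA system is normed if every variable can reach the empty process ε. -/
def BPA.Normed {V A : Type*} (rules : V → A → List V → Prop) : Prop :=
  ∀ X : V, BPA.Reach rules [X] []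

/-- The redundant set Rd(α) = { X | Xα ≃ α }. -/
def BPA.Rd {V A : Type*} (rules : V → A → List V → Prop) (tau : A) (α : List V) : Set V :=
  {X | BrBisim (BPA.Trans rules) tau (X :: α) α}


/-!
Branching bisimilarity coincides with Basten's semi-branching bisimilarity, whose transitivity
is direct. In a normed system, `γα ≃ α` forces `γ ⇒ ε`: the least number of visible steps on a
path to `ε` is additive and cannot increase along `≃`. With the stuttering lemma, induction on
`γ` then puts every letter of `γ` into `Rd(α)`, so `Rd(α) ⊆ Rd(β)` turns `γα ≃ α` into
`γβ ≃ β`. Finally `{(γ₁β, γ₂β) | γ₁α ≃ γ₂α}` is a semi-branching bisimulation up to `≃`: a move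
of `γ₁` is answered by a move of `γ₂`, unless the answer runs into `α`, and then `γ₁α ≃ α`, a
case settled by the previous step.
-/

section SemiBranching

variable {S A : Type*}

def OptTrans (tr : S → A → S → Prop) (tau : A) (b : S) (l : A) (b' : S) : Prop :=
  (l = tau ∧ b' = b) ∨ tr b l b'

def IsSemiBranchingBisim (tr : S → A → S → Prop) (tau : A) (R : S → S → Prop) : Prop :=
  Symmetric R ∧
  ∀ a b a' (l : A), R a b → tr a l a' →
    ∃ b'' b', SilentStar tr tau b b'' ∧ OptTrans tr tau b'' l b' ∧ R a b'' ∧ R a' b'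

def SemiBrBisim (tr : S → A → S → Prop) (tau : A) (a b : S) : Prop :=
  ∃ R, IsSemiBranchingBisim tr tau R ∧ R a b

variable {tr : S → A → S → Prop} {tau : A}

local notation:50 a " ⇒ " b => SilentStar tr tau a b
local notation:50 a " ≈ₛ " b => SemiBrBisim tr tau a b

theorem OptTrans.silentStar {b b'' b' : S} (hb : b ⇒ b'') (h : OptTrans tr tau b'' tau b') :
    b ⇒ b' := by
  rcases h with ⟨-, rfl⟩ | h
  exacts [hb, hb.tail h]

namespace SemiBrBisim

theorem symm {a b : S} : (a ≈ₛ b) → (b ≈ₛ a)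
  | ⟨R, hR, hab⟩ => ⟨R, hR, hR.1 hab⟩

theorem refl (a : S) : a ≈ₛ a := by
  refine ⟨Eq, ⟨fun _ _ => Eq.symm, ?_⟩, rfl⟩
  rintro a _ a' l rfl h
  exact ⟨a, a', .refl, .inr h, rfl, rfl⟩

theorem step {a b a' : S} {l : A} (hab : a ≈ₛ b) (h : tr a l a') :
    ∃ b'' b', (b ⇒ b'') ∧ OptTrans tr tau b'' l b' ∧ (a ≈ₛ b'') ∧ (a' ≈ₛ b') := by
  obtain ⟨R, hR, hab⟩ := hab
  obtain ⟨b'', b', hb, hopt, h₁, h₂⟩ := hR.2 a b a' l hab h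
  exact ⟨b'', b', hb, hopt, ⟨R, hR, h₁⟩, ⟨R, hR, h₂⟩⟩

theorem coinduct (R : S → S → Prop) (hR : Symmetric R)
    (hstep : ∀ a b a' (l : A), R a b → tr a l a' →
      ∃ b'' b', (b ⇒ b'') ∧ OptTrans tr tau b'' l b' ∧
        (R a b'' ∨ (a ≈ₛ b'')) ∧ (R a' b' ∨ (a' ≈ₛ b')))
    {a b : S} (hab : R a b) : a ≈ₛ b := by
  refine ⟨fun p q => R p q ∨ (p ≈ₛ q), ⟨?_, ?_⟩, .inl hab⟩
  · rintro p q (h | h)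
    exacts [.inl (hR h), .inr h.symm]
  · rintro p q p' l (h | h) ht
    · exact hstep p q p' l h ht
    · obtain ⟨b'', b', hb, hopt, h₁, h₂⟩ := h.step ht
      exact ⟨b'', b', hb, hopt, .inr h₁, .inr h₂⟩

theorem silentStar {a a' b : S} (h : a ⇒ a') (hab : a ≈ₛ b) : ∃ b', (b ⇒ b') ∧ (a' ≈ₛ b') := by
  induction h using Relation.ReflTransGen.head_induction_on generalizing b with
  | refl => exact ⟨b, .refl, hab⟩
  | head ht _ ih =>
    obtain ⟨b'', b', hb, hopt, -, hc⟩ := hab.step ht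
    obtain ⟨b₂, hb₂, h₂⟩ := ih hc
    exact ⟨b₂, (OptTrans.silentStar hb hopt).trans hb₂, h₂⟩

theorem trans {a b c : S} (hab : a ≈ₛ b) (hbc : b ≈ₛ c) : a ≈ₛ c := by
  refine coinduct (fun x z => ∃ y, (x ≈ₛ y) ∧ (y ≈ₛ z)) ?_ ?_ ⟨b, hab, hbc⟩
  · rintro x z ⟨y, hxy, hyz⟩
    exact ⟨y, hyz.symm, hxy.symm⟩
  · rintro a c a' l ⟨b, hab, hbc⟩ ht
    obtain ⟨b'', b', hb, hopt, hab'', ha'b'⟩ := hab.step ht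
    obtain ⟨c₁, hc₁, hb''c₁⟩ := hbc.silentStar hb
    rcases hopt with ⟨rfl, rfl⟩ | ht'
    · exact ⟨c₁, c₁, hc₁, .inl ⟨rfl, rfl⟩, .inl ⟨_, hab'', hb''c₁⟩, .inl ⟨_, ha'b', hb''c₁⟩⟩
    · obtain ⟨c'', c', hc, hopt', h₁, h₂⟩ := hb''c₁.step ht'
      exact ⟨c'', c', hc₁.trans hc, hopt', .inl ⟨b'', hab'', h₁⟩, .inl ⟨b', ha'b', h₂⟩⟩

theorem stutter {x m y : S} (hxy : x ≈ₛ y) (hxm : x ⇒ m) (hmy : m ⇒ y) : x ≈ₛ m := by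
  let Mid : S → S → Prop := fun p q => ∃ u w, (u ⇒ p) ∧ (p ⇒ w) ∧ (u ≈ₛ w) ∧ (u ≈ₛ q)
  refine coinduct (fun p q => Mid p q ∨ Mid q p) (fun p q h => h.symm) ?_
    (.inr ⟨x, y, hxm, hmy, hxy, refl x⟩)
  rintro p q p' l (⟨u, w, hup, -, -, huq⟩ | ⟨u, w, -, hqw, huw, hup⟩) ht
  · obtain ⟨q₁, hqq₁, hpq₁⟩ := huq.silentStar hup
    obtain ⟨b'', b', hb, hopt, h₁, h₂⟩ := hpq₁.step ht
    exact ⟨b'', b', hqq₁.trans hb, hopt, .inr h₁, .inr h₂⟩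
  · obtain ⟨b'', b', hb, hopt, h₁, h₂⟩ := (hup.symm.trans huw).step ht
    exact ⟨b'', b', hqw.trans hb, hopt, .inr h₁, .inr h₂⟩

end SemiBrBisim

theorem IsBranchingBisim.isSemiBranchingBisim {R : S → S → Prop}
    (h : IsBranchingBisim tr tau R) : IsSemiBranchingBisim tr tau R := by
  refine ⟨h.1, fun a b a' l hab ht => ?_⟩
  rcases h.2 a b a' l hab ht with ⟨rfl, h'⟩ | ⟨b'', b', hb, ht', h₁, h₂⟩
  · exact ⟨b, b, .refl, .inl ⟨rfl, rfl⟩, hab, h'⟩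
  · exact ⟨b'', b', hb, .inr ht', h₁, h₂⟩

theorem SemiBrBisim.isBranchingBisim : IsBranchingBisim tr tau (SemiBrBisim tr tau) := by
  refine ⟨fun _ _ => symm, fun a b a' l hab ht => ?_⟩
  obtain ⟨b'', b', hb, hopt, h₁, h₂⟩ := hab.step ht
  rcases hopt with ⟨hl, rfl⟩ | ht'
  · exact .inl ⟨hl, (h₂.trans h₁.symm).trans hab⟩
  · exact .inr ⟨b'', b', hb, ht', h₁, h₂⟩

theorem brBisim_iff_semiBrBisim {a b : S} : BrBisim tr tau a b ↔ (a ≈ₛ b) :=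
  ⟨fun ⟨_, hR, h⟩ => ⟨_, hR.isSemiBranchingBisim, h⟩,
    fun h => ⟨_, SemiBrBisim.isBranchingBisim, h⟩⟩

end SemiBranching

namespace BPA

variable {V A : Type*} {rules : V → A → List V → Prop} {tau : A}

local notation:50 p " ⇒ " q => SilentStar (BPA.Trans rules) tau p q
local notation:50 p " ≈ₛ " q => SemiBrBisim (BPA.Trans rules) tau p q

theorem mem_rd_iff {X : V} {α : List V} : X ∈ Rd rules tau α ↔ (X :: α ≈ₛ α) :=
  brBisim_iff_semiBrBisim

theorem trans_cons_iff {X : V} {σ : List V} {l : A} {q : List V} :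
    Trans rules (X :: σ) l q ↔ ∃ ζ, rules X l ζ ∧ q = ζ ++ σ := by
  constructor
  · rintro ⟨Y, ζ, σ', h, hr, rfl⟩
    obtain ⟨rfl, rfl⟩ := List.cons.inj h
    exact ⟨ζ, hr, rfl⟩
  · rintro ⟨ζ, hr, rfl⟩
    exact ⟨X, ζ, σ, rfl, hr, rfl⟩

theorem not_trans_nil {l : A} {q : List V} : ¬ Trans rules [] l q := by
  rintro ⟨_, _, _, h, -⟩
  exact List.cons_ne_nil _ _ h.symm

theorem Trans.append_right {γ γ' : List V} {l : A} (h : Trans rules γ l γ') (δ : List V) :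
    Trans rules (γ ++ δ) l (γ' ++ δ) := by
  obtain ⟨X, ζ, σ, rfl, hr, rfl⟩ := h
  exact ⟨X, ζ, σ ++ δ, rfl, hr, List.append_assoc ..⟩

theorem trans_append_of_ne_nil {γ δ q : List V} {l : A} (hγ : γ ≠ [])
    (h : Trans rules (γ ++ δ) l q) : ∃ γ', Trans rules γ l γ' ∧ q = γ' ++ δ := by
  obtain ⟨X, γ₀, rfl⟩ := List.exists_cons_of_ne_nil hγ
  obtain ⟨ζ, hr, rfl⟩ := trans_cons_iff.mp h
  exact ⟨ζ ++ γ₀, trans_cons_iff.mpr ⟨ζ, hr, rfl⟩, (List.append_assoc ..).symm⟩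

theorem optTrans_append_right {γ γ' : List V} {l : A} (h : OptTrans (Trans rules) tau γ l γ')
    (δ : List V) : OptTrans (Trans rules) tau (γ ++ δ) l (γ' ++ δ) := by
  rcases h with ⟨hl, rfl⟩ | h
  exacts [.inl ⟨hl, rfl⟩, .inr (h.append_right δ)]

theorem optTrans_append_of_ne_nil {γ δ q : List V} {l : A} (hγ : γ ≠ [])
    (h : OptTrans (Trans rules) tau (γ ++ δ) l q) :
    ∃ γ', OptTrans (Trans rules) tau γ l γ' ∧ q = γ' ++ δ := by
  rcases h with ⟨hl, rfl⟩ | h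
  · exact ⟨γ, .inl ⟨hl, rfl⟩, rfl⟩
  · obtain ⟨γ', h', rfl⟩ := trans_append_of_ne_nil hγ h
    exact ⟨γ', .inr h', rfl⟩

theorem silentStar_append_right {γ γ' : List V} (h : γ ⇒ γ') (δ : List V) :
    γ ++ δ ⇒ γ' ++ δ :=
  Relation.ReflTransGen.lift (· ++ δ) (fun _ _ h => h.append_right δ) _ _ h

theorem eq_nil_of_silentStar_nil {q : List V} (h : [] ⇒ q) : q = [] := by
  rcases Relation.ReflTransGen.cases_head h with h | ⟨_, h, -⟩
  exacts [h.symm, (not_trans_nil h).elim]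

theorem silentStar_append_cases {σ α t : List V} (h : σ ++ α ⇒ t) :
    (∃ σ', (σ ⇒ σ') ∧ t = σ' ++ α) ∨ ((σ ⇒ []) ∧ (α ⇒ t)) := by
  generalize hp : σ ++ α = p at h
  induction h using Relation.ReflTransGen.head_induction_on generalizing σ with
  | refl => exact .inl ⟨σ, .refl, hp.symm⟩
  | head ht hct ih =>
    subst hp
    obtain rfl | hσ := eq_or_ne σ []
    · exact .inr ⟨.refl, .head ht hct⟩
    obtain ⟨σ₁, ht₁, rfl⟩ := trans_append_of_ne_nil hσ ht
    rcases ih rfl with ⟨σ', hσ', rfl⟩ | ⟨hσ₁, hα⟩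
    exacts [.inl ⟨σ', .head ht₁ hσ', rfl⟩, .inr ⟨.head ht₁ hσ₁, hα⟩]

theorem silentStar_nil_of_append {γ δ : List V} (h : γ ++ δ ⇒ []) : (γ ⇒ []) ∧ (δ ⇒ []) := by
  rcases silentStar_append_cases h with ⟨σ', hσ', h'⟩ | h
  · obtain ⟨rfl, rfl⟩ := List.append_eq_nil_iff.mp h'.symm
    exact ⟨hσ', .refl⟩
  · exact h

theorem _root_.SemiBrBisim.append_left {δ₁ δ₂ : List V} (h : δ₁ ≈ₛ δ₂) (σ : List V) :
    σ ++ δ₁ ≈ₛ σ ++ δ₂ := by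
  refine SemiBrBisim.coinduct (fun p q => ∃ σ δ₁ δ₂, (δ₁ ≈ₛ δ₂) ∧ p = σ ++ δ₁ ∧ q = σ ++ δ₂)
    ?_ ?_ ⟨σ, δ₁, δ₂, h, rfl, rfl⟩
  · rintro _ _ ⟨σ, δ₁, δ₂, h, rfl, rfl⟩
    exact ⟨σ, δ₂, δ₁, h.symm, rfl, rfl⟩
  · rintro _ _ p' l ⟨σ, δ₁, δ₂, h, rfl, rfl⟩ ht
    obtain rfl | hσ := eq_or_ne σ []
    · obtain ⟨b'', b', hb, hopt, h₁, h₂⟩ := h.step ht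
      exact ⟨b'', b', hb, hopt, .inr h₁, .inr h₂⟩
    obtain ⟨σ', ht', rfl⟩ := trans_append_of_ne_nil hσ ht
    exact ⟨σ ++ δ₂, σ' ++ δ₂, .refl, .inr (ht'.append_right δ₂),
      .inl ⟨σ, δ₁, δ₂, h, rfl, rfl⟩, .inl ⟨σ', δ₁, δ₂, h, rfl, rfl⟩⟩

theorem reach_nil (hn : Normed rules) (σ : List V) : Reach rules σ [] := by
  induction σ with
  | nil => exact .refl
  | cons X σ ih =>
    have hX : Reach rules ([X] ++ σ) ([] ++ σ) :=
      Relation.ReflTransGen.lift (· ++ σ) (fun _ _ ⟨l, h⟩ => ⟨l, h.append_right σ⟩) _ _ (hn X)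
    exact hX.trans ih

/-- `NilPath rules tau p n`: a path from `p` to `ε` on which `n` steps are charged. Every visible
step is charged and a silent one may be, so the least such `n` is the branching norm of `p`. -/
inductive NilPath (rules : V → A → List V → Prop) (tau : A) : List V → ℕ → Prop
  | nil : NilPath rules tau [] 0
  | silent {p q : List V} {n : ℕ} : Trans rules p tau q → NilPath rules tau q n →
      NilPath rules tau p n
  | charged {p q : List V} {n : ℕ} {l : A} : Trans rules p l q → NilPath rules tau q n →
      NilPath rules tau p (n + 1)

theorem NilPath.of_silentStar {p q : List V} {n : ℕ} (h : p ⇒ q) (hq : NilPath rules tau q n) :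
    NilPath rules tau p n := by
  induction h using Relation.ReflTransGen.head_induction_on with
  | refl => exact hq
  | head ht _ ih => exact .silent ht ih

theorem NilPath.silentStar_nil {p : List V} (h : NilPath rules tau p 0) : p ⇒ [] := by
  generalize hn : 0 = n at h
  induction h with
  | nil => exact .refl
  | silent ht _ ih => exact .head ht (ih hn)
  | charged => omega

theorem NilPath.exists_of_reach {p : List V} (h : Reach rules p []) :
    ∃ n, NilPath rules tau p n := by
  induction h using Relation.ReflTransGen.head_induction_on with
  | refl => exact ⟨0, .nil⟩
  | head ht _ ih =>
    obtain ⟨l, ht⟩ := ht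
    obtain ⟨n, hn⟩ := ih
    exact ⟨n + 1, .charged ht hn⟩

theorem NilPath.split {γ δ : List V} {n : ℕ} (h : NilPath rules tau (γ ++ δ) n) :
    ∃ n₁ n₂, n₁ + n₂ = n ∧ NilPath rules tau γ n₁ ∧ NilPath rules tau δ n₂ := by
  generalize hp : γ ++ δ = p at h
  induction h generalizing γ with
  | nil =>
    obtain ⟨rfl, rfl⟩ := List.append_eq_nil_iff.mp hp
    exact ⟨0, 0, rfl, .nil, .nil⟩
  | @silent p q n ht hq ih =>
    subst hp
    obtain rfl | hγ := eq_or_ne γ []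
    · exact ⟨0, n, zero_add n, .nil, .silent ht hq⟩
    obtain ⟨γ', ht', rfl⟩ := trans_append_of_ne_nil hγ ht
    obtain ⟨n₁, n₂, rfl, h₁, h₂⟩ := ih rfl
    exact ⟨n₁, n₂, rfl, .silent ht' h₁, h₂⟩
  | @charged p q n l ht hq ih =>
    subst hp
    obtain rfl | hγ := eq_or_ne γ []
    · exact ⟨0, n + 1, zero_add _, .nil, .charged ht hq⟩
    obtain ⟨γ', ht', rfl⟩ := trans_append_of_ne_nil hγ ht
    obtain ⟨n₁, n₂, rfl, h₁, h₂⟩ := ih rfl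
    exact ⟨n₁ + 1, n₂, by omega, .charged ht' h₁, h₂⟩

theorem _root_.SemiBrBisim.step_of_nil {p q : List V} {l : A} (hp : p ≈ₛ [])
    (ht : Trans rules p l q) : l = tau ∧ (q ≈ₛ []) := by
  obtain ⟨b'', b', hb, hopt, -, hq⟩ := hp.step ht
  obtain rfl := eq_nil_of_silentStar_nil hb
  rcases hopt with ⟨hl, rfl⟩ | h
  exacts [⟨hl, hq⟩, (not_trans_nil h).elim]

theorem NilPath.zero_of_semiBrBisim_nil {p : List V} {n : ℕ} (h : NilPath rules tau p n)
    (hp : p ≈ₛ []) : NilPath rules tau p 0 := by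
  induction h with
  | nil => exact .nil
  | silent ht _ ih => exact .silent ht (ih (hp.step_of_nil ht).2)
  | charged ht _ ih =>
    obtain ⟨rfl, hq⟩ := hp.step_of_nil ht
    exact .silent ht (ih hq)

theorem NilPath.transfer (hn : Normed rules) {x y : List V} {n : ℕ} (h : NilPath rules tau x n)
    (hxy : x ≈ₛ y) : ∃ m ≤ n, NilPath rules tau y m := by
  induction h generalizing y with
  | nil =>
    obtain ⟨_, hy⟩ := NilPath.exists_of_reach (tau := tau) (reach_nil hn y)
    exact ⟨0, le_rfl, hy.zero_of_semiBrBisim_nil hxy.symm⟩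
  | silent ht _ ih =>
    obtain ⟨b'', b', hb, hopt, -, hq⟩ := hxy.step ht
    obtain ⟨m, hm, hb'⟩ := ih hq
    exact ⟨m, hm, .of_silentStar (OptTrans.silentStar hb hopt) hb'⟩
  | @charged p q n l ht _ ih =>
    obtain ⟨b'', b', hb, hopt, -, hq⟩ := hxy.step ht
    obtain ⟨m, hm, hb'⟩ := ih hq
    rcases hopt with ⟨-, rfl⟩ | ht'
    · exact ⟨m, by omega, .of_silentStar hb hb'⟩
    · exact ⟨m + 1, by omega, .of_silentStar hb (.charged ht' hb')⟩

theorem silentStar_nil_of_append_semiBrBisim (hn : Normed rules) {γ α : List V}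
    (h : γ ++ α ≈ₛ α) : γ ⇒ [] := by
  classical
  have hα : ∃ n, NilPath rules tau α n := NilPath.exists_of_reach (reach_nil hn α)
  obtain ⟨m, hm, hγα⟩ := (Nat.find_spec hα).transfer hn h.symm
  obtain ⟨n₁, n₂, rfl, hγ, hα'⟩ := hγα.split
  obtain rfl : n₁ = 0 := by have := Nat.find_min' hα hα'; omega
  exact hγ.silentStar_nil

variable {α β : List V}

theorem append_semiBrBisim_self_of_rd_subset (hn : Normed rules)
    (hsub : Rd rules tau α ⊆ Rd rules tau β) {γ : List V} (h : γ ++ α ≈ₛ α) : γ ++ β ≈ₛ β := by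
  induction γ with
  | nil => exact .refl β
  | cons X γ ih =>
    obtain ⟨hX, hγ⟩ :=
      silentStar_nil_of_append (γ := [X]) (silentStar_nil_of_append_semiBrBisim hn h)
    have hγα : γ ++ α ≈ₛ α :=
      (h.stutter (silentStar_append_right hX (γ ++ α)) (silentStar_append_right hγ α)).symm.trans h
    have hXα : X ∈ Rd rules tau α := mem_rd_iff.mpr ((hγα.append_left [X]).symm.trans h)
    exact ((ih hγα).append_left [X]).trans (mem_rd_iff.mp (hsub hXα))

theorem semiBrBisim_append_of_rd_subset (hn : Normed rules) (hsub : Rd rules tau α ⊆ Rd rules tau β)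
    {γ₁ γ₂ : List V} (h : γ₁ ++ α ≈ₛ γ₂ ++ α) : γ₁ ++ β ≈ₛ γ₂ ++ β := by
  refine SemiBrBisim.coinduct
    (fun p q => ∃ g₁ g₂, (g₁ ++ α ≈ₛ g₂ ++ α) ∧ p = g₁ ++ β ∧ q = g₂ ++ β) ?_ ?_
    ⟨γ₁, γ₂, h, rfl, rfl⟩
  · rintro _ _ ⟨g₁, g₂, hg, rfl, rfl⟩
    exact ⟨g₂, g₁, hg.symm, rfl, rfl⟩
  rintro _ _ p' l ⟨g₁, g₂, hg, rfl, rfl⟩ ht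
  by_cases h₁ : g₁ ++ α ≈ₛ α
  · have h₂ : g₂ ++ α ≈ₛ α := hg.symm.trans h₁
    have hβ := (append_semiBrBisim_self_of_rd_subset hn hsub h₁).trans
      (append_semiBrBisim_self_of_rd_subset hn hsub h₂).symm
    obtain ⟨b'', b', hb, hopt, h₁, h₂⟩ := hβ.step ht
    exact ⟨b'', b', hb, hopt, .inr h₁, .inr h₂⟩
  have hg₁ : g₁ ≠ [] := by rintro rfl; exact h₁ (.refl α)
  obtain ⟨g₁', ht₁, rfl⟩ := trans_append_of_ne_nil hg₁ ht
  obtain ⟨s'', s', hs, hopt, hs'', hs'⟩ := hg.step (ht₁.append_right α)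
  -- if the silent answer of `g₂α` consumed `g₂`, stuttering would give `g₁α ≈ₛ α`
  obtain ⟨σ, hσ, rfl⟩ : ∃ σ, (g₂ ⇒ σ) ∧ s'' = σ ++ α := by
    rcases silentStar_append_cases hs with hσ | ⟨hg₂, hαs⟩
    · exact hσ
    · have hg₂α := (hg.symm.trans hs'').stutter (silentStar_append_right hg₂ α) hαs
      exact (h₁ (hg.trans hg₂α)).elim
  have hσ_ne : σ ≠ [] := by rintro rfl; exact h₁ hs''
  obtain ⟨σ', hopt', rfl⟩ := optTrans_append_of_ne_nil hσ_ne hopt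
  exact ⟨σ ++ β, σ' ++ β, silentStar_append_right hσ β, optTrans_append_right hopt' β,
    .inl ⟨g₁, σ, hs'', rfl, rfl⟩, .inl ⟨g₁', σ', hs', rfl, rfl⟩⟩

end BPA

/-- If two processes of a normed BPA system have the same redundant set, they
can be exchanged as suffixes without affecting branching bisimilarity. -/
theorem rd_eq_suffix_exchange {V A : Type*} (rules : V → A → List V → Prop) (tau : A)
    (hn : BPA.Normed rules) (α β : List V)
    (hrd : BPA.Rd rules tau α = BPA.Rd rules tau β) :
    ∀ γ₁ γ₂ : List V,
      (BrBisim (BPA.Trans rules) tau (γ₁ ++ α) (γ₂ ++ α) ↔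
       BrBisim (BPA.Trans rules) tau (γ₁ ++ β) (γ₂ ++ β)) := by
  intro γ₁ γ₂
  simp only [brBisim_iff_semiBrBisim]
  exact ⟨BPA.semiBrBisim_append_of_rd_subset hn hrd.le,
    BPA.semiBrBisim_append_of_rd_subset hn hrd.ge⟩
end

section
/- In a normed BPA system, if Rd(γ₁) = Rd(γ₂), then for every process α the branching norm of α relative to γ₁ equals the branching norm of α relative to γ₂, i.e., ‖α‖_b^{γ₁} = ‖α‖_b^{γ₂}. -/
/-- γ ⇒_{≃} γ' : silent moves between branching bisimilar processes. -/
def SBStar {S A : Type*} (trans : S → A → S → Prop) (tau : A) (p q : S) : Prop :=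
  SilentStar trans tau p q ∧ BrBisim trans tau p q

/-- A state-changing step: a visible action, or a silent step to a
non-branching-bisimilar state. -/
def JStep {S A : Type*} (trans : S → A → S → Prop) (tau : A) (p q : S) : Prop :=
  (∃ a, a ≠ tau ∧ trans p a q) ∨ (trans p tau q ∧ ¬ BrBisim trans tau p q)

/-- `Cost trans tau p q k` : there is a sequence from `p` to `q` alternating
≃-preserving silent phases and state-changing steps, with exactly `k`
state-changing steps. -/
inductive Cost {S A : Type*} (trans : S → A → S → Prop) (tau : A) : S → S → ℕ → Prop
  | zero {p q : S} : SBStar trans tau p q → Cost trans tau p q 0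
  | step {p p' p'' q : S} {k : ℕ} : SBStar trans tau p p' → JStep trans tau p' p'' →
      Cost trans tau p'' q k → Cost trans tau p q (k + 1)

/-- The branching norm of α relative to β: minimal number of state-changing
steps to reduce αβ to β. -/
noncomputable def BPA.bnormRel {V A : Type*} (rules : V → A → List V → Prop) (tau : A)
    (α β : List V) : ℕ :=
  sInf {k | Cost (BPA.Trans rules) tau (α ++ β) β k}

/-- The branching norm of α. -/
noncomputable def BPA.bnorm {V A : Type*} (rules : V → A → List V → Prop) (tau : A)
    (α : List V) : ℕ :=
  BPA.bnormRel rules tau α []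

section Generic

variable {S A : Type*}

/-- A symmetric relation is a semi-branching bisimulation. -/
def IsSemiBB (trans : S → A → S → Prop) (tau : A) (R : S → S → Prop) : Prop :=
  Symmetric R ∧
  ∀ a b a' (l : A), R a b → trans a l a' →
    (l = tau ∧ ∃ b1, SilentStar trans tau b b1 ∧ R a b1 ∧ R a' b1) ∨
    ∃ b'' b', SilentStar trans tau b b'' ∧ trans b'' l b' ∧ R a b'' ∧ R a' b'

/-- Semi-branching bisimilarity. -/
def SemiBisim (trans : S → A → S → Prop) (tau : A) (a b : S) : Prop :=
  ∃ R, IsSemiBB trans tau R ∧ R a b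

variable {trans : S → A → S → Prop} {tau : A}

theorem IsBranchingBisim.semi {R : S → S → Prop} (h : IsBranchingBisim trans tau R) :
    IsSemiBB trans tau R := by
  obtain ⟨hs, ht⟩ := h
  refine ⟨hs, fun a b a' l hab hstep => ?_⟩
  rcases ht a b a' l hab hstep with ⟨rfl, h'⟩ | ⟨b'', b', h1, h2, h3, h4⟩
  · exact Or.inl ⟨rfl, b, Relation.ReflTransGen.refl, hab, h'⟩
  · exact Or.inr ⟨b'', b', h1, h2, h3, h4⟩

theorem IsSemiBB.lift {R : S → S → Prop} (h : IsSemiBB trans tau R) {a a' : S}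
    (hs : SilentStar trans tau a a') :
    ∀ b, R a b → ∃ b', SilentStar trans tau b b' ∧ R a' b' := by
  induction hs using Relation.ReflTransGen.head_induction_on with
  | refl => exact fun b hb => ⟨b, Relation.ReflTransGen.refl, hb⟩
  | head hstep hrest ih =>
    intro b hb
    rcases h.2 _ _ _ _ hb hstep with ⟨_, b1, hb1, _, hxb1⟩ | ⟨b'', b', hsil, hstep', _, hx⟩
    · obtain ⟨b2, h2, hR⟩ := ih b1 hxb1
      exact ⟨b2, hb1.trans h2, hR⟩
    · obtain ⟨b2, h2, hR⟩ := ih b' hx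
      exact ⟨b2, (hsil.tail hstep').trans h2, hR⟩

theorem semiBisim_isSemiBB : IsSemiBB trans tau (SemiBisim trans tau) := by
  constructor
  · rintro a b ⟨R, hR, hab⟩; exact ⟨R, hR, hR.1 hab⟩
  · rintro a b a' l ⟨R, hR, hab⟩ hstep
    rcases hR.2 a b a' l hab hstep with ⟨rfl, b1, h1, h2, h3⟩ | ⟨b'', b', h1, h2, h3, h4⟩
    · exact Or.inl ⟨rfl, b1, h1, ⟨R, hR, h2⟩, ⟨R, hR, h3⟩⟩
    · exact Or.inr ⟨b'', b', h1, h2, ⟨R, hR, h3⟩, ⟨R, hR, h4⟩⟩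

theorem isBranchingBisim_eq : IsBranchingBisim trans tau (Eq : S → S → Prop) := by
  refine ⟨fun a b h => h.symm, fun a b a' l hab hstep => ?_⟩
  subst hab
  exact Or.inr ⟨a, a', Relation.ReflTransGen.refl, hstep, rfl, rfl⟩

theorem SemiBisim.symm' {a b : S} (h : SemiBisim trans tau a b) : SemiBisim trans tau b a :=
  semiBisim_isSemiBB.1 h

theorem semi_comp_step {R S' : S → S → Prop} (hR : IsSemiBB trans tau R)
    (hS : IsSemiBB trans tau S') {x m y x' : S} {l : A}
    (hxm : R x m) (hmy : S' m y) (hstep : trans x l x') :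
    (l = tau ∧ ∃ y1, SilentStar trans tau y y1 ∧ (∃ n, R x n ∧ S' n y1) ∧
      (∃ n, R x' n ∧ S' n y1)) ∨
    ∃ y2 y3, SilentStar trans tau y y2 ∧ trans y2 l y3 ∧ (∃ n, R x n ∧ S' n y2) ∧
      (∃ n, R x' n ∧ S' n y3) := by
  rcases hR.2 _ _ _ _ hxm hstep with ⟨rfl, m1, hm1, hxm1, hx'm1⟩ |
    ⟨m'', m', hmsil, hmstep, hxm'', hx'm'⟩
  · obtain ⟨y1, hy1, hm1y1⟩ := hS.lift hm1 y hmy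
    exact Or.inl ⟨rfl, y1, hy1, ⟨m1, hxm1, hm1y1⟩, ⟨m1, hx'm1, hm1y1⟩⟩
  · obtain ⟨y1, hy1, hm''y1⟩ := hS.lift hmsil y hmy
    rcases hS.2 _ _ _ _ hm''y1 hmstep with ⟨rfl, y2, hy2, hm''y2, hm'y2⟩ |
      ⟨y2, y3, h1, h2, h3, h4⟩
    · exact Or.inl ⟨rfl, y2, hy1.trans hy2, ⟨m'', hxm'', hm''y2⟩, ⟨m', hx'm', hm'y2⟩⟩
    · exact Or.inr ⟨y2, y3, hy1.trans h1, h2, ⟨m'', hxm'', h3⟩, ⟨m', hx'm', h4⟩⟩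

theorem SemiBisim.trans' {a b c : S} (h1 : SemiBisim trans tau a b)
    (h2 : SemiBisim trans tau b c) : SemiBisim trans tau a c := by
  obtain ⟨R, hR, hab⟩ := h1
  obtain ⟨S', hS, hbc⟩ := h2
  refine ⟨fun x y => R x y ∨ S' x y ∨ (∃ m, R x m ∧ S' m y) ∨ (∃ m, S' x m ∧ R m y),
    ⟨?_, ?_⟩, Or.inr (Or.inr (Or.inl ⟨b, hab, hbc⟩))⟩
  · rintro x y (h | h | ⟨m, hm1, hm2⟩ | ⟨m, hm1, hm2⟩)
    exacts [Or.inl (hR.1 h), Or.inr (Or.inl (hS.1 h)),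
      Or.inr (Or.inr (Or.inr ⟨m, hS.1 hm2, hR.1 hm1⟩)),
      Or.inr (Or.inr (Or.inl ⟨m, hR.1 hm2, hS.1 hm1⟩))]
  · rintro x y x' l (h | h | ⟨m, hm1, hm2⟩ | ⟨m, hm1, hm2⟩) hstep
    · rcases hR.2 _ _ _ _ h hstep with ⟨rfl, b1, k1, k2, k3⟩ | ⟨b'', b', k1, k2, k3, k4⟩
      · exact Or.inl ⟨rfl, b1, k1, Or.inl k2, Or.inl k3⟩
      · exact Or.inr ⟨b'', b', k1, k2, Or.inl k3, Or.inl k4⟩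
    · rcases hS.2 _ _ _ _ h hstep with ⟨rfl, b1, k1, k2, k3⟩ | ⟨b'', b', k1, k2, k3, k4⟩
      · exact Or.inl ⟨rfl, b1, k1, Or.inr (Or.inl k2), Or.inr (Or.inl k3)⟩
      · exact Or.inr ⟨b'', b', k1, k2, Or.inr (Or.inl k3), Or.inr (Or.inl k4)⟩
    · rcases semi_comp_step hR hS hm1 hm2 hstep with ⟨rfl, y1, k1, k2, k3⟩ |
        ⟨y2, y3, k1, k2, k3, k4⟩
      · exact Or.inl ⟨rfl, y1, k1, Or.inr (Or.inr (Or.inl k2)), Or.inr (Or.inr (Or.inl k3))⟩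
      · exact Or.inr ⟨y2, y3, k1, k2, Or.inr (Or.inr (Or.inl k3)), Or.inr (Or.inr (Or.inl k4))⟩
    · rcases semi_comp_step hS hR hm1 hm2 hstep with ⟨rfl, y1, k1, k2, k3⟩ |
        ⟨y2, y3, k1, k2, k3, k4⟩
      · exact Or.inl ⟨rfl, y1, k1, Or.inr (Or.inr (Or.inr k2)), Or.inr (Or.inr (Or.inr k3))⟩
      · exact Or.inr ⟨y2, y3, k1, k2, Or.inr (Or.inr (Or.inr k3)), Or.inr (Or.inr (Or.inr k4))⟩

theorem semiBisim_stutter {p m q z : S} (h1 : SilentStar trans tau p m)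
    (h2 : SilentStar trans tau m q) (hp : SemiBisim trans tau p z)
    (hq : SemiBisim trans tau q z) : SemiBisim trans tau m z := by
  refine ⟨fun x y =>
      (∃ p' q', SilentStar trans tau p' x ∧ SilentStar trans tau x q' ∧
        SemiBisim trans tau p' y ∧ SemiBisim trans tau q' y) ∨
      (∃ p' q', SilentStar trans tau p' y ∧ SilentStar trans tau y q' ∧
        SemiBisim trans tau p' x ∧ SemiBisim trans tau q' x),
    ⟨?_, ?_⟩, Or.inl ⟨p, q, h1, h2, hp, hq⟩⟩
  · rintro x y (⟨p', q', k1, k2, k3, k4⟩ | ⟨p', q', k1, k2, k3, k4⟩)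
    exacts [Or.inr ⟨p', q', k1, k2, k3, k4⟩, Or.inl ⟨p', q', k1, k2, k3, k4⟩]
  · rintro x y x' l (⟨p', q', k1, k2, k3, k4⟩ | ⟨p', q', k1, k2, k3, k4⟩) hstep
    · obtain ⟨y1, hy1, hxy1⟩ := semiBisim_isSemiBB.lift k1 y k3
      rcases semiBisim_isSemiBB.2 _ _ _ _ hxy1 hstep with ⟨rfl, y2, j1, j2, j3⟩ |
        ⟨y2, y3, j1, j2, j3, j4⟩
      · exact Or.inl ⟨rfl, y2, hy1.trans j1,
          Or.inl ⟨x, x, Relation.ReflTransGen.refl, Relation.ReflTransGen.refl, j2, j2⟩,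
          Or.inl ⟨x', x', Relation.ReflTransGen.refl, Relation.ReflTransGen.refl, j3, j3⟩⟩
      · exact Or.inr ⟨y2, y3, hy1.trans j1, j2,
          Or.inl ⟨x, x, Relation.ReflTransGen.refl, Relation.ReflTransGen.refl, j3, j3⟩,
          Or.inl ⟨x', x', Relation.ReflTransGen.refl, Relation.ReflTransGen.refl, j4, j4⟩⟩
    · -- here the mover x is the second leg: we know q' related to x, and y ⇒ q'
      rcases semiBisim_isSemiBB.2 _ _ _ _ k4.symm' hstep with ⟨rfl, q2, j1, j2, j3⟩ |
        ⟨q2, q3, j1, j2, j3, j4⟩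
      · exact Or.inl ⟨rfl, q2, k2.trans j1,
          Or.inl ⟨x, x, Relation.ReflTransGen.refl, Relation.ReflTransGen.refl, j2, j2⟩,
          Or.inl ⟨x', x', Relation.ReflTransGen.refl, Relation.ReflTransGen.refl, j3, j3⟩⟩
      · exact Or.inr ⟨q2, q3, k2.trans j1, j2,
          Or.inl ⟨x, x, Relation.ReflTransGen.refl, Relation.ReflTransGen.refl, j3, j3⟩,
          Or.inl ⟨x', x', Relation.ReflTransGen.refl, Relation.ReflTransGen.refl, j4, j4⟩⟩

theorem isBranchingBisim_semiBisim : IsBranchingBisim trans tau (SemiBisim trans tau) := by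
  refine ⟨fun a b h => h.symm', fun a b a' l hab hstep => ?_⟩
  rcases semiBisim_isSemiBB.2 a b a' l hab hstep with ⟨rfl, b1, hb1, hab1, ha'b1⟩ |
    ⟨b'', b', h1, h2, h3, h4⟩
  · rcases Relation.ReflTransGen.cases_tail hb1 with rfl | ⟨c, hc, hcb1⟩
    · exact Or.inl ⟨rfl, ha'b1⟩
    · refine Or.inr ⟨c, b1, hc, hcb1, ?_, ha'b1⟩
      exact (semiBisim_stutter hc (Relation.ReflTransGen.single hcb1) hab.symm'
        hab1.symm').symm'
  · exact Or.inr ⟨b'', b', h1, h2, h3, h4⟩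

theorem brBisim_iff_semiBisim {a b : S} :
    BrBisim trans tau a b ↔ SemiBisim trans tau a b :=
  ⟨fun ⟨R, hR, h⟩ => ⟨R, hR.semi, h⟩, fun h => ⟨_, isBranchingBisim_semiBisim, h⟩⟩

theorem BrBisim.refl' (a : S) : BrBisim trans tau a a := ⟨Eq, isBranchingBisim_eq, rfl⟩

theorem BrBisim.symm' {a b : S} (h : BrBisim trans tau a b) : BrBisim trans tau b a := by
  obtain ⟨R, hR, hab⟩ := h; exact ⟨R, hR, hR.1 hab⟩

theorem BrBisim.trans' {a b c : S} (h1 : BrBisim trans tau a b)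
    (h2 : BrBisim trans tau b c) : BrBisim trans tau a c :=
  brBisim_iff_semiBisim.mpr ((brBisim_iff_semiBisim.mp h1).trans'
    (brBisim_iff_semiBisim.mp h2))

theorem brBisim_stutter {p m q z : S} (h1 : SilentStar trans tau p m)
    (h2 : SilentStar trans tau m q) (hp : BrBisim trans tau p z)
    (hq : BrBisim trans tau q z) : BrBisim trans tau m z :=
  brBisim_iff_semiBisim.mpr (semiBisim_stutter h1 h2 (brBisim_iff_semiBisim.mp hp)
    (brBisim_iff_semiBisim.mp hq))

theorem BrBisim.match {a b a' : S} {l : A} (h : BrBisim trans tau a b)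
    (hstep : trans a l a') :
    (l = tau ∧ BrBisim trans tau a' b) ∨
    ∃ b'' b', SilentStar trans tau b b'' ∧ trans b'' l b' ∧ BrBisim trans tau a b'' ∧
      BrBisim trans tau a' b' := by
  obtain ⟨R, hR, hab⟩ := h
  rcases hR.2 _ _ _ _ hab hstep with ⟨rfl, h'⟩ | ⟨b'', b', h1, h2, h3, h4⟩
  · exact Or.inl ⟨rfl, ⟨R, hR, h'⟩⟩
  · exact Or.inr ⟨b'', b', h1, h2, ⟨R, hR, h3⟩, ⟨R, hR, h4⟩⟩

end Generic
section BPAPart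

variable {V A : Type*} {rules : V → A → List V → Prop} {tau : A}

theorem BPA.Trans.cons_decomp {X : V} {β q : List V} {l : A}
    (h : BPA.Trans rules (X :: β) l q) : ∃ α, rules X l α ∧ q = α ++ β := by
  obtain ⟨X', α, β', hp, hr, hq⟩ := h
  cases hp
  exact ⟨α, hr, hq⟩

theorem BPA.Trans.append {p q : List V} {l : A} (h : BPA.Trans rules p l q) (σ : List V) :
    BPA.Trans rules (p ++ σ) l (q ++ σ) := by
  obtain ⟨X, α, β, rfl, hr, rfl⟩ := h
  exact ⟨X, α, β ++ σ, rfl, hr, by simp⟩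

theorem silentStar_append {p q : List V}
    (h : SilentStar (BPA.Trans rules) tau p q) (σ : List V) :
    SilentStar (BPA.Trans rules) tau (p ++ σ) (q ++ σ) := by
  induction h with
  | refl => exact Relation.ReflTransGen.refl
  | tail _ hstep ih => exact ih.tail (hstep.append σ)

theorem reach_append {p q : List V} (h : BPA.Reach rules p q) (σ : List V) :
    BPA.Reach rules (p ++ σ) (q ++ σ) := by
  induction h with
  | refl => exact Relation.ReflTransGen.refl
  | tail _ hstep ih =>
    obtain ⟨l, hl⟩ := hstep
    exact ih.tail ⟨l, hl.append σ⟩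

theorem reach_nil (hn : BPA.Normed rules) : ∀ α : List V, BPA.Reach rules α [] := by
  intro α
  induction α with
  | nil => exact Relation.ReflTransGen.refl
  | cons X α ih => exact Relation.ReflTransGen.trans (reach_append (hn X) α) ih

theorem silentStar_nil {x : List V} (h : SilentStar (BPA.Trans rules) tau [] x) :
    x = [] := by
  rcases Relation.ReflTransGen.cases_head h with rfl | ⟨c, hc, _⟩
  · rfl
  · obtain ⟨X, α, β, habs, -, -⟩ := hc
    exact absurd habs (by simp)

theorem silent_factor {γ s0 s : List V} (h : SilentStar (BPA.Trans rules) tau s0 s) :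
    ∀ δ : List V, s0 = δ ++ γ →
      (∃ δ', s = δ' ++ γ ∧ ∀ σ, SilentStar (BPA.Trans rules) tau (δ ++ σ) (δ' ++ σ)) ∨
      ((∀ σ, SilentStar (BPA.Trans rules) tau (δ ++ σ) σ) ∧
        SilentStar (BPA.Trans rules) tau γ s) := by
  induction h using Relation.ReflTransGen.head_induction_on with
  | refl =>
    rintro δ rfl
    exact Or.inl ⟨δ, rfl, fun σ => Relation.ReflTransGen.refl⟩
  | @head c m hstep hrest ih =>
    rintro δ rfl
    match δ with
    | [] => exact Or.inr ⟨fun σ => Relation.ReflTransGen.refl,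
        Relation.ReflTransGen.head hstep hrest⟩
    | X :: δ₀ =>
      obtain ⟨α, hr, hm⟩ := BPA.Trans.cons_decomp (show BPA.Trans rules (X :: (δ₀ ++ γ)) tau m from hstep)
      rcases ih (α ++ δ₀) (by simp [hm]) with ⟨δ', hs, hu⟩ | ⟨hu, hγ⟩
      · exact Or.inl ⟨δ', hs, fun σ =>
          Relation.ReflTransGen.head ⟨X, α, δ₀ ++ σ, rfl, hr, by simp⟩ (hu σ)⟩
      · exact Or.inr ⟨fun σ =>
          Relation.ReflTransGen.head ⟨X, α, δ₀ ++ σ, rfl, hr, by simp⟩ (hu σ), hγ⟩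

theorem cost_prepend {p q r : List V} {k : ℕ}
    (hsil : SilentStar (BPA.Trans rules) tau p q)
    (heq : BrBisim (BPA.Trans rules) tau p q)
    (h : Cost (BPA.Trans rules) tau q r k) : Cost (BPA.Trans rules) tau p r k := by
  cases h with
  | zero hsb => exact .zero ⟨hsil.trans hsb.1, heq.trans' hsb.2⟩
  | step hsb hj hc => exact .step ⟨hsil.trans hsb.1, heq.trans' hsb.2⟩ hj hc

theorem cost_of_reach {p q : List V} (h : BPA.Reach rules p q) :
    ∃ k, Cost (BPA.Trans rules) tau p q k := by
  induction h using Relation.ReflTransGen.head_induction_on with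
  | refl => exact ⟨0, .zero ⟨Relation.ReflTransGen.refl, BrBisim.refl' _⟩⟩
  | @head c m hstep _ ih =>
    obtain ⟨k, hk⟩ := ih
    obtain ⟨l, hl⟩ := hstep
    by_cases htau : l = tau
    · rw [htau] at hl
      by_cases heq : BrBisim (BPA.Trans rules) tau c m
      · exact ⟨k, cost_prepend (Relation.ReflTransGen.single hl) heq hk⟩
      · exact ⟨k + 1, .step ⟨Relation.ReflTransGen.refl, BrBisim.refl' _⟩
          (Or.inr ⟨hl, heq⟩) hk⟩
    · exact ⟨k + 1, .step ⟨Relation.ReflTransGen.refl, BrBisim.refl' _⟩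
        (Or.inl ⟨l, htau, hl⟩) hk⟩

theorem eqv_nil_silent (hn : BPA.Normed rules) {q : List V} :
    BrBisim (BPA.Trans rules) tau q [] → SilentStar (BPA.Trans rules) tau q [] := by
  have hr := reach_nil hn q
  induction hr using Relation.ReflTransGen.head_induction_on with
  | refl => exact fun _ => Relation.ReflTransGen.refl
  | @head c m hstep _ ih =>
    intro h
    obtain ⟨l, hl⟩ := hstep
    rcases h.match hl with ⟨rfl, h'⟩ | ⟨b'', b', hb, hb', -, -⟩
    · exact Relation.ReflTransGen.head hl (ih h')
    · obtain rfl := silentStar_nil hb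
      obtain ⟨X, α, β, habs, -, -⟩ := hb'
      exact absurd habs (by simp)

theorem cost_transfer_nil (hn : BPA.Normed rules) {k : ℕ} {p : List V}
    (h : Cost (BPA.Trans rules) tau p [] k) :
    ∀ q, BrBisim (BPA.Trans rules) tau p q →
      ∃ k' ≤ k, Cost (BPA.Trans rules) tau q [] k' := by
  generalize hz : ([] : List V) = z at h
  induction h with
  | zero hsb =>
    subst hz
    intro q hq
    have hq0 : BrBisim (BPA.Trans rules) tau q [] := hq.symm'.trans' hsb.2
    exact ⟨0, le_refl 0, .zero ⟨eqv_nil_silent hn hq0, hq0⟩⟩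
  | @step p p₁ p₂ _ k₀ hsb hj hc ih =>
    subst hz
    specialize ih rfl
    intro q hq
    have hq1 : BrBisim (BPA.Trans rules) tau p₁ q := hsb.2.symm'.trans' hq
    rcases hj with ⟨a, hna, hstep⟩ | ⟨hstep, hneq⟩
    · rcases hq1.match hstep with ⟨rfl, -⟩ | ⟨q'', q', h1, h2, h3, h4⟩
      · exact absurd rfl hna
      · obtain ⟨k', hk', hck⟩ := ih q' h4
        exact ⟨k' + 1, Nat.succ_le_succ hk',
          .step ⟨h1, hq1.symm'.trans' h3⟩ (Or.inl ⟨a, hna, h2⟩) hck⟩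
    · rcases hq1.match hstep with ⟨-, h'⟩ | ⟨q'', q', h1, h2, h3, h4⟩
      · obtain ⟨k', hk', hck⟩ := ih q h'
        exact ⟨k', le_trans hk' (Nat.le_succ _), hck⟩
      · have hne' : ¬ BrBisim (BPA.Trans rules) tau q'' q' := fun hcon =>
          hneq ((h3.trans' hcon).trans' h4.symm')
        obtain ⟨k', hk', hck⟩ := ih q' h4
        exact ⟨k' + 1, Nat.succ_le_succ hk',
          .step ⟨h1, hq1.symm'.trans' h3⟩ (Or.inr ⟨h2, hne'⟩) hck⟩

/-- Absolute branching norm. -/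
noncomputable def normN (rules : V → A → List V → Prop) (tau : A) (p : List V) : ℕ :=
  sInf {k | Cost (BPA.Trans rules) tau p [] k}

theorem normN_mem (hn : BPA.Normed rules) (p : List V) :
    Cost (BPA.Trans rules) tau p [] (normN rules tau p) :=
  Nat.sInf_mem (cost_of_reach (reach_nil hn p))

theorem normN_le {p : List V} {k : ℕ} (h : Cost (BPA.Trans rules) tau p [] k) :
    normN rules tau p ≤ k := Nat.sInf_le h

theorem normN_congr (hn : BPA.Normed rules) {p q : List V}
    (h : BrBisim (BPA.Trans rules) tau p q) : normN rules tau p = normN rules tau q := by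
  apply le_antisymm
  · obtain ⟨k', hk', hck⟩ := cost_transfer_nil hn (normN_mem hn q) p h.symm'
    exact le_trans (normN_le hck) hk'
  · obtain ⟨k', hk', hck⟩ := cost_transfer_nil hn (normN_mem hn p) q h
    exact le_trans (normN_le hck) hk'

theorem cost_factor {k : ℕ} {p : List V} (h : Cost (BPA.Trans rules) tau p [] k) :
    ∀ δ σ : List V, p = δ ++ σ →
      ∃ c₁ c₂, c₁ + c₂ ≤ k ∧ Cost (BPA.Trans rules) tau (δ ++ σ) σ c₁ ∧
        Cost (BPA.Trans rules) tau σ [] c₂ := by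
  generalize hz : ([] : List V) = z at h
  induction h with
  | @zero p q hsb =>
    subst hz
    rintro δ σ rfl
    rcases silent_factor (γ := σ) hsb.1 δ rfl with ⟨δ', h0, hu⟩ | ⟨hu, hγ⟩
    · obtain ⟨rfl, rfl⟩ : δ' = [] ∧ σ = [] := List.append_eq_nil_iff.mp h0.symm
      exact ⟨0, 0, le_refl 0, .zero hsb,
        .zero ⟨Relation.ReflTransGen.refl, BrBisim.refl' _⟩⟩
    · have hst : BrBisim (BPA.Trans rules) tau σ (δ ++ σ) :=
        brBisim_stutter (hu σ) hγ (BrBisim.refl' _) hsb.2.symm'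
      exact ⟨0, 0, le_refl 0, .zero ⟨hu σ, hst.symm'⟩, .zero ⟨hγ, hst.trans' hsb.2⟩⟩
  | @step p p' p'' q k₀ hsb hj hc ih =>
    subst hz
    specialize ih rfl
    rintro δ σ rfl
    rcases silent_factor (γ := σ) hsb.1 δ rfl with ⟨η, rfl, hu⟩ | ⟨hu, hγ⟩
    · match η, hsb, hj, hu with
      | [], hsb, hj, hu =>
        exact ⟨0, k₀ + 1, by omega, .zero hsb,
          .step ⟨Relation.ReflTransGen.refl, BrBisim.refl' _⟩ hj hc⟩
      | Y :: η₀, hsb, hj, hu =>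
        obtain ⟨l, hl⟩ : ∃ l, BPA.Trans rules (Y :: (η₀ ++ σ)) l p'' := by
          rcases hj with ⟨a, -, h'⟩ | ⟨h', -⟩
          exacts [⟨a, h'⟩, ⟨tau, h'⟩]
        obtain ⟨μ, -, rfl⟩ := hl.cons_decomp
        obtain ⟨c₁, c₂, hle, hA, hB⟩ := ih (μ ++ η₀) σ (by simp)
        exact ⟨c₁ + 1, c₂, by omega, .step hsb hj (by simpa using hA), hB⟩
    · have hst : BrBisim (BPA.Trans rules) tau σ (δ ++ σ) :=
        brBisim_stutter (hu σ) hγ (BrBisim.refl' _) hsb.2.symm'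
      exact ⟨0, k₀ + 1, by omega, .zero ⟨hu σ, hst.symm'⟩,
        .step ⟨hγ, hst.trans' hsb.2⟩ hj hc⟩

theorem norm_drop_le (hn : BPA.Normed rules) (δ σ : List V) :
    normN rules tau σ ≤ normN rules tau (δ ++ σ) := by
  obtain ⟨c₁, c₂, hle, -, hB⟩ := cost_factor (normN_mem hn (δ ++ σ)) δ σ rfl
  exact le_trans (normN_le hB) (by omega)

theorem eqv_of_norm_eq (hn : BPA.Normed rules) {δ σ : List V}
    (h : normN rules tau (δ ++ σ) ≤ normN rules tau σ) :
    BrBisim (BPA.Trans rules) tau (δ ++ σ) σ := by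
  obtain ⟨c₁, c₂, hle, hA, hB⟩ := cost_factor (normN_mem hn (δ ++ σ)) δ σ rfl
  have hc2 : normN rules tau σ ≤ c₂ := normN_le hB
  have hc1 : c₁ = 0 := by omega
  subst hc1
  cases hA with
  | zero hsb => exact hsb.2

theorem head_tail_red (hn : BPA.Normed rules) {X : V} {β γ : List V}
    (h : BrBisim (BPA.Trans rules) tau ((X :: β) ++ γ) γ) :
    BrBisim (BPA.Trans rules) tau (β ++ γ) γ ∧
      BrBisim (BPA.Trans rules) tau (X :: (β ++ γ)) (β ++ γ) := by
  have h0 : normN rules tau ((X :: β) ++ γ) = normN rules tau γ := normN_congr hn h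
  have h1 : normN rules tau (β ++ γ) ≤ normN rules tau ((X :: β) ++ γ) :=
    norm_drop_le hn [X] (β ++ γ)
  have h2 : normN rules tau γ ≤ normN rules tau (β ++ γ) := norm_drop_le hn β γ
  constructor
  · exact eqv_of_norm_eq hn (by omega)
  · exact eqv_of_norm_eq hn (δ := [X]) (σ := β ++ γ) (by
      show normN rules tau ((X :: β) ++ γ) ≤ _
      omega)

theorem eqv_append_congr {σ σ' : List V}
    (h : BrBisim (BPA.Trans rules) tau σ σ') (α : List V) :
    BrBisim (BPA.Trans rules) tau (α ++ σ) (α ++ σ') := by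
  refine ⟨fun x y => ((∃ β : List V, x = β ++ σ ∧ y = β ++ σ') ∨
      (∃ β : List V, x = β ++ σ' ∧ y = β ++ σ)) ∨ BrBisim (BPA.Trans rules) tau x y,
    ⟨?_, ?_⟩, Or.inl (Or.inl ⟨α, rfl, rfl⟩)⟩
  · rintro x y ((⟨β, rfl, rfl⟩ | ⟨β, rfl, rfl⟩) | hb)
    exacts [Or.inl (Or.inr ⟨β, rfl, rfl⟩), Or.inl (Or.inl ⟨β, rfl, rfl⟩), Or.inr hb.symm']
  · rintro x y x' l ((⟨β, rfl, rfl⟩ | ⟨β, rfl, rfl⟩) | hb) hstep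
    · match β, hstep with
      | [], hstep =>
        rcases h.match hstep with ⟨rfl, h'⟩ | ⟨b'', b', k1, k2, k3, k4⟩
        · exact Or.inl ⟨rfl, Or.inr h'⟩
        · exact Or.inr ⟨b'', b', k1, k2, Or.inr k3, Or.inr k4⟩
      | Y :: β₀, hstep =>
        obtain ⟨μ, hr, rfl⟩ := BPA.Trans.cons_decomp
          (show BPA.Trans rules (Y :: (β₀ ++ σ)) l _ from hstep)
        exact Or.inr ⟨(Y :: β₀) ++ σ', μ ++ (β₀ ++ σ'), Relation.ReflTransGen.refl,
          ⟨Y, μ, β₀ ++ σ', rfl, hr, rfl⟩, Or.inl (Or.inl ⟨Y :: β₀, rfl, rfl⟩),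
          Or.inl (Or.inl ⟨μ ++ β₀, by simp, by simp⟩)⟩
    · match β, hstep with
      | [], hstep =>
        rcases h.symm'.match hstep with ⟨rfl, h'⟩ | ⟨b'', b', k1, k2, k3, k4⟩
        · exact Or.inl ⟨rfl, Or.inr h'⟩
        · exact Or.inr ⟨b'', b', k1, k2, Or.inr k3, Or.inr k4⟩
      | Y :: β₀, hstep =>
        obtain ⟨μ, hr, rfl⟩ := BPA.Trans.cons_decomp
          (show BPA.Trans rules (Y :: (β₀ ++ σ')) l _ from hstep)
        exact Or.inr ⟨(Y :: β₀) ++ σ, μ ++ (β₀ ++ σ), Relation.ReflTransGen.refl,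
          ⟨Y, μ, β₀ ++ σ, rfl, hr, rfl⟩, Or.inl (Or.inr ⟨Y :: β₀, rfl, rfl⟩),
          Or.inl (Or.inr ⟨μ ++ β₀, by simp, by simp⟩)⟩
    · rcases hb.match hstep with ⟨rfl, h'⟩ | ⟨b'', b', k1, k2, k3, k4⟩
      · exact Or.inl ⟨rfl, Or.inr h'⟩
      · exact Or.inr ⟨b'', b', k1, k2, Or.inr k3, Or.inr k4⟩

theorem rd_congr {γ γ' : List V} (h : BrBisim (BPA.Trans rules) tau γ γ') :
    BPA.Rd rules tau γ = BPA.Rd rules tau γ' := by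
  ext X
  simp only [BPA.Rd, Set.mem_setOf_eq]
  constructor <;> intro hX
  · have h1 : BrBisim (BPA.Trans rules) tau (X :: γ') (X :: γ) :=
      eqv_append_congr h.symm' [X]
    exact (h1.trans' hX).trans' h
  · have h1 : BrBisim (BPA.Trans rules) tau (X :: γ) (X :: γ') :=
      eqv_append_congr h [X]
    exact (h1.trans' hX).trans' h.symm'

theorem red_transfer (hn : BPA.Normed rules) {γ₁ γ₂ : List V}
    (hrd : BPA.Rd rules tau γ₁ = BPA.Rd rules tau γ₂) :
    ∀ β : List V, BrBisim (BPA.Trans rules) tau (β ++ γ₁) γ₁ →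
      BrBisim (BPA.Trans rules) tau (β ++ γ₂) γ₂ := by
  intro β
  induction β with
  | nil => exact fun _ => BrBisim.refl' _
  | cons X β₀ ih =>
    intro h
    obtain ⟨h1, h2⟩ := head_tail_red hn h
    have h3 := ih h1
    have hX1 : X ∈ BPA.Rd rules tau γ₁ := by
      rw [← rd_congr h1]; exact h2
    have hX2 : X ∈ BPA.Rd rules tau (β₀ ++ γ₂) := by
      rw [rd_congr h3, ← hrd]; exact hX1
    exact (show BrBisim (BPA.Trans rules) tau (X :: (β₀ ++ γ₂)) (β₀ ++ γ₂) from hX2).trans' h3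

end BPAPart
section FinalPart

variable {V A : Type*} {rules : V → A → List V → Prop} {tau : A}

theorem eqv_transfer (hn : BPA.Normed rules) {γ₁ γ₂ : List V}
    (hrd : BPA.Rd rules tau γ₁ = BPA.Rd rules tau γ₂) {η η' : List V}
    (h : BrBisim (BPA.Trans rules) tau (η ++ γ₁) (η' ++ γ₁)) :
    BrBisim (BPA.Trans rules) tau (η ++ γ₂) (η' ++ γ₂) := by
  refine ⟨fun x y => BrBisim (BPA.Trans rules) tau x y ∨
      ∃ α β : List V, x = α ++ γ₂ ∧ y = β ++ γ₂ ∧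
        BrBisim (BPA.Trans rules) tau (α ++ γ₁) (β ++ γ₁),
    ⟨?_, ?_⟩, Or.inr ⟨η, η', rfl, rfl, h⟩⟩
  · rintro x y (hb | ⟨α, β, rfl, rfl, he⟩)
    exacts [Or.inl hb.symm', Or.inr ⟨β, α, rfl, rfl, he.symm'⟩]
  · rintro x y x' l (hb | ⟨α, β, rfl, rfl, he⟩) hstep
    · rcases hb.match hstep with ⟨rfl, h'⟩ | ⟨b'', b', k1, k2, k3, k4⟩
      · exact Or.inl ⟨rfl, Or.inl h'⟩
      · exact Or.inr ⟨b'', b', k1, k2, Or.inl k3, Or.inl k4⟩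
    · match α, he, hstep with
      | [], he, hstep =>
        -- x = γ₂ ; he : γ₁ ≃ β ++ γ₁ ; so y = β ++ γ₂ ≃ γ₂ : fall back to BrBisim
        have hy : BrBisim (BPA.Trans rules) tau (β ++ γ₂) γ₂ :=
          red_transfer hn hrd β he.symm'
        rcases hy.symm'.match hstep with ⟨rfl, h'⟩ | ⟨b'', b', k1, k2, k3, k4⟩
        · exact Or.inl ⟨rfl, Or.inl h'⟩
        · exact Or.inr ⟨b'', b', k1, k2, Or.inl k3, Or.inl k4⟩
      | X :: α₀, he, hstep =>
        obtain ⟨μ, hr, rfl⟩ := BPA.Trans.cons_decomp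
          (show BPA.Trans rules (X :: (α₀ ++ γ₂)) l _ from hstep)
        have hstep1 : BPA.Trans rules ((X :: α₀) ++ γ₁) l (μ ++ (α₀ ++ γ₁)) :=
          ⟨X, μ, α₀ ++ γ₁, rfl, hr, rfl⟩
        rcases he.match hstep1 with ⟨rfl, h'⟩ | ⟨t, t', k1, k2, k3, k4⟩
        · exact Or.inl ⟨rfl, Or.inr ⟨μ ++ α₀, β, by simp, rfl, by simpa using h'⟩⟩
        · rcases silent_factor (γ := γ₁) k1 β rfl with ⟨κ, rfl, hu⟩ | ⟨hu, hγt⟩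
          · match κ, k2, k3, hu with
            | [], k2, k3, hu =>
              -- t = γ₁, so both sides are redundant over γ₁
              have hx : BrBisim (BPA.Trans rules) tau ((X :: α₀) ++ γ₂) γ₂ :=
                red_transfer hn hrd (X :: α₀) k3
              have hβ : BrBisim (BPA.Trans rules) tau (β ++ γ₁) γ₁ := he.symm'.trans' k3
              have hy : BrBisim (BPA.Trans rules) tau (β ++ γ₂) γ₂ :=
                red_transfer hn hrd β hβ
              have hxy : BrBisim (BPA.Trans rules) tau ((X :: α₀) ++ γ₂) (β ++ γ₂) :=
                hx.trans' hy.symm'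
              rcases hxy.match hstep with ⟨rfl, h'⟩ | ⟨b'', b', j1, j2, j3, j4⟩
              · exact Or.inl ⟨rfl, Or.inl h'⟩
              · exact Or.inr ⟨b'', b', j1, j2, Or.inl j3, Or.inl j4⟩
            | Z :: κ₀, k2, k3, hu =>
              obtain ⟨ν, hrZ, rfl⟩ := BPA.Trans.cons_decomp
                (show BPA.Trans rules (Z :: (κ₀ ++ γ₁)) l _ from k2)
              refine Or.inr ⟨(Z :: κ₀) ++ γ₂, ν ++ (κ₀ ++ γ₂), hu γ₂,
                ⟨Z, ν, κ₀ ++ γ₂, rfl, hrZ, rfl⟩,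
                Or.inr ⟨X :: α₀, Z :: κ₀, rfl, rfl, k3⟩,
                Or.inr ⟨μ ++ α₀, ν ++ κ₀, by simp, by simp, by simpa using k4⟩⟩
          · -- the matching path dips through γ₁ : both sides redundant
            have hst : BrBisim (BPA.Trans rules) tau γ₁ (β ++ γ₁) :=
              brBisim_stutter (hu γ₁) hγt (BrBisim.refl' _) (k3.symm'.trans' he)
            have hβ : BrBisim (BPA.Trans rules) tau (β ++ γ₁) γ₁ := hst.symm'
            have hxr : BrBisim (BPA.Trans rules) tau ((X :: α₀) ++ γ₁) γ₁ := he.trans' hβ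
            have hx : BrBisim (BPA.Trans rules) tau ((X :: α₀) ++ γ₂) γ₂ :=
              red_transfer hn hrd (X :: α₀) hxr
            have hy : BrBisim (BPA.Trans rules) tau (β ++ γ₂) γ₂ :=
              red_transfer hn hrd β hβ
            have hxy : BrBisim (BPA.Trans rules) tau ((X :: α₀) ++ γ₂) (β ++ γ₂) :=
              hx.trans' hy.symm'
            rcases hxy.match hstep with ⟨rfl, h'⟩ | ⟨b'', b', j1, j2, j3, j4⟩
            · exact Or.inl ⟨rfl, Or.inl h'⟩
            · exact Or.inr ⟨b'', b', j1, j2, Or.inl j3, Or.inl j4⟩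

theorem cost_transfer (hn : BPA.Normed rules) {γ₁ γ₂ : List V}
    (hrd : BPA.Rd rules tau γ₁ = BPA.Rd rules tau γ₂) {k : ℕ} {p : List V}
    (h : Cost (BPA.Trans rules) tau p γ₁ k) :
    ∀ δ : List V, p = δ ++ γ₁ → ∃ k' ≤ k, Cost (BPA.Trans rules) tau (δ ++ γ₂) γ₂ k' := by
  generalize hz : γ₁ = z at h
  induction h with
  | zero hsb =>
    subst hz
    rintro δ rfl
    have hred : BrBisim (BPA.Trans rules) tau (δ ++ γ₂) γ₂ :=
      red_transfer hn hrd δ hsb.2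
    rcases silent_factor (γ := γ₁) hsb.1 δ rfl with ⟨δ', hδ', hu⟩ | ⟨hu, -⟩
    · have hnil : δ' = [] := by
        have hlen := congrArg List.length hδ'
        simp at hlen
        exact hlen
      subst hnil
      exact ⟨0, le_refl 0, .zero ⟨hu γ₂, hred⟩⟩
    · exact ⟨0, le_refl 0, .zero ⟨hu γ₂, hred⟩⟩
  | @step p p' p'' q k₀ hsb hj hc ih =>
    subst hz
    specialize ih rfl
    rintro δ rfl
    rcases silent_factor (γ := γ₁) hsb.1 δ rfl with ⟨η, rfl, hu⟩ | ⟨hu, hγt⟩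
    · match η, hsb, hj, hu with
      | [], hsb, hj, hu =>
        have hred : BrBisim (BPA.Trans rules) tau (δ ++ γ₂) γ₂ :=
          red_transfer hn hrd δ hsb.2
        exact ⟨0, by omega, .zero ⟨hu γ₂, hred⟩⟩
      | Y :: η₀, hsb, hj, hu =>
        have hsb2 : BrBisim (BPA.Trans rules) tau (δ ++ γ₂) ((Y :: η₀) ++ γ₂) :=
          eqv_transfer hn hrd hsb.2
        rcases hj with ⟨a, hna, htr⟩ | ⟨htr, hne⟩
        · obtain ⟨μ, hrμ, rfl⟩ := BPA.Trans.cons_decomp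
            (show BPA.Trans rules (Y :: (η₀ ++ γ₁)) a _ from htr)
          obtain ⟨k', hk', hck⟩ := ih (μ ++ η₀) (by simp)
          exact ⟨k' + 1, Nat.succ_le_succ hk',
            .step ⟨hu γ₂, hsb2⟩ (Or.inl ⟨a, hna, ⟨Y, μ, η₀ ++ γ₂, rfl, hrμ, rfl⟩⟩)
              (by simpa using hck)⟩
        · obtain ⟨μ, hrμ, rfl⟩ := BPA.Trans.cons_decomp
            (show BPA.Trans rules (Y :: (η₀ ++ γ₁)) tau _ from htr)
          obtain ⟨k', hk', hck⟩ := ih (μ ++ η₀) (by simp)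
          have hne2 : ¬ BrBisim (BPA.Trans rules) tau ((Y :: η₀) ++ γ₂) (μ ++ (η₀ ++ γ₂)) := by
            intro hcon
            apply hne
            have hcon' : BrBisim (BPA.Trans rules) tau ((Y :: η₀) ++ γ₂)
                ((μ ++ η₀) ++ γ₂) := by simpa using hcon
            have := eqv_transfer hn hrd.symm hcon'
            simpa using this
          exact ⟨k' + 1, Nat.succ_le_succ hk',
            .step ⟨hu γ₂, hsb2⟩ (Or.inr ⟨⟨Y, μ, η₀ ++ γ₂, rfl, hrμ, rfl⟩, hne2⟩)
              (by simpa using hck)⟩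
    · have hst : BrBisim (BPA.Trans rules) tau γ₁ (δ ++ γ₁) :=
        brBisim_stutter (hu γ₁) hγt (BrBisim.refl' _) hsb.2.symm'
      have hred : BrBisim (BPA.Trans rules) tau (δ ++ γ₂) γ₂ :=
        red_transfer hn hrd δ hst.symm'
      exact ⟨0, by omega, .zero ⟨hu γ₂, hred⟩⟩

end FinalPart
/-- The relative branching norm depends only on the redundant set of the suffix. -/
theorem bnormRel_eq_of_rd_eq {V A : Type*} (rules : V → A → List V → Prop) (tau : A)
    (hn : BPA.Normed rules) (γ₁ γ₂ : List V)
    (hrd : BPA.Rd rules tau γ₁ = BPA.Rd rules tau γ₂) :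
    ∀ α : List V, BPA.bnormRel rules tau α γ₁ = BPA.bnormRel rules tau α γ₂ := by
  intro α
  have hne1 : ∃ k, Cost (BPA.Trans rules) tau (α ++ γ₁) γ₁ k := by
    have := reach_append (reach_nil hn α) γ₁
    exact cost_of_reach this
  have hne2 : ∃ k, Cost (BPA.Trans rules) tau (α ++ γ₂) γ₂ k := by
    have := reach_append (reach_nil hn α) γ₂
    exact cost_of_reach this
  unfold BPA.bnormRel
  apply le_antisymm
  · obtain ⟨k', hk', hck⟩ := cost_transfer hn hrd.symm
      (show Cost (BPA.Trans rules) tau (α ++ γ₂) γ₂ _ from Nat.sInf_mem hne2) α rfl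
    exact le_trans (Nat.sInf_le hck) hk'
  · obtain ⟨k', hk', hck⟩ := cost_transfer hn hrd
      (show Cost (BPA.Trans rules) tau (α ++ γ₁) γ₁ _ from Nat.sInf_mem hne1) α rfl
    exact le_trans (Nat.sInf_le hck) hk'
end
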